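/- Let a and b be real numbers and for integers n ≥ 3 define v_n(a,b) = (∑_{k=1}^{n−2} 1/k) + (a·n+b)/(n(n−1)) − ln n. Then lim_{n→∞} n²·(v_n(a,b) − v_{n+1}(a,b)) = a − 3/2. -/

import Mathlib

open Filter Topology

noncomputable def v (a b : ℝ) (n : ℕ) : ℝ :=
  (∑ k ∈ Finset.Icc 1 (n - 2), (1 : ℝ) / k) + (a * n + b) / ((n : ℝ) * ((n : ℝ) - 1))
    - Real.log n

/-! The harmonic sums telescope, leaving `1 / (n - 1)`, and partial fractions turn `n²` times the
rational part of `v n - v (n + 1)` into `a - 1 - n + (a + b - 1) / (n - 1) + b / (n + 1)`.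
The remaining `n² log (1 + 1/n) - n` tends to `-1/2` by the second-order Taylor bound
`|log (1 + t) - t + t² / 2| ≤ |t|³ / (1 - |t|)`. -/

namespace Real

theorem abs_log_one_add_sub_self_add_sq_div_two_le {t : ℝ} (ht : |t| < 1) :
    |log (1 + t) - t + t ^ 2 / 2| ≤ |t| ^ 3 / (1 - |t|) := by
  have h := abs_log_sub_add_sum_range_le (x := -t) (by rwa [abs_neg]) 2
  simp only [Finset.sum_range_succ, Finset.sum_range_zero, abs_neg, sub_neg_eq_add] at h
  convert h using 2
  norm_num
  ring

theorem abs_sq_mul_log_one_add_inv_sub_self_add_half_le {x : ℝ} (hx : 2 ≤ x) :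
    |x ^ 2 * log (1 + x⁻¹) - x + 1 / 2| ≤ 1 / (x - 1) := by
  have hx0 : 0 < x := by linarith
  have habs : |x⁻¹| = x⁻¹ := abs_of_pos (inv_pos.2 hx0)
  have hlt : x⁻¹ < 1 := inv_lt_one_of_one_lt₀ (by linarith)
  have h := abs_log_one_add_sub_self_add_sq_div_two_le (t := x⁻¹) (by rwa [habs])
  rw [habs] at h
  calc |x ^ 2 * log (1 + x⁻¹) - x + 1 / 2|
      = x ^ 2 * |log (1 + x⁻¹) - x⁻¹ + (x⁻¹) ^ 2 / 2| := by
        rw [← abs_of_pos (pow_pos hx0 2), ← abs_mul, abs_of_pos (pow_pos hx0 2)]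
        congr 1
        field_simp
    _ ≤ x ^ 2 * ((x⁻¹) ^ 3 / (1 - x⁻¹)) := by gcongr
    _ = 1 / (x - 1) := by
        have : x - 1 ≠ 0 := by linarith
        field_simp

theorem tendsto_sq_mul_log_one_add_inv_sub_self_atTop :
    Tendsto (fun x : ℝ => x ^ 2 * log (1 + x⁻¹) - x) atTop (𝓝 (-1 / 2)) := by
  have hbound : Tendsto (fun x : ℝ => 1 / (x - 1)) atTop (𝓝 0) :=
    tendsto_const_nhds.div_atTop (tendsto_atTop_add_const_right _ _ tendsto_id)
  have h : Tendsto (fun x : ℝ => x ^ 2 * log (1 + x⁻¹) - x + 1 / 2) atTop (𝓝 0) := by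
    refine squeeze_zero_norm' ?_ hbound
    filter_upwards [eventually_ge_atTop 2] with x hx
    exact abs_sq_mul_log_one_add_inv_sub_self_add_half_le hx
  convert h.sub_const (1 / 2) using 2 <;> ring

end Real

theorem v_sub_v_succ (a b : ℝ) {n : ℕ} (hn : 2 ≤ n) :
    v a b n - v a b (n + 1) = (a * n + b) / (n * (n - 1)) - 1 / (n - 1)
      - (a * (n + 1) + b) / (n * (n + 1)) + Real.log (1 + (n : ℝ)⁻¹) := by
  have hn0 : (0 : ℝ) < n := by positivity
  have hsum : ∑ k ∈ Finset.Icc 1 (n + 1 - 2), (1 : ℝ) / k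
      = ∑ k ∈ Finset.Icc 1 (n - 2), (1 : ℝ) / k + 1 / (n - 1) := by
    obtain ⟨m, rfl⟩ := Nat.exists_eq_add_of_le' hn
    rw [show m + 2 + 1 - 2 = m + 1 by omega, Finset.sum_Icc_succ_top (by omega)]
    push_cast
    ring_nf
  have hlog : Real.log (n + 1) - Real.log n = Real.log (1 + (n : ℝ)⁻¹) := by
    rw [← Real.log_div (by positivity) hn0.ne', add_div, div_self hn0.ne', one_div]
  simp only [v, hsum]
  push_cast
  rw [← hlog]
  ring

theorem sq_mul_v_sub_v_succ (a b : ℝ) {n : ℕ} (hn : 2 ≤ n) :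
    (n : ℝ) ^ 2 * (v a b n - v a b (n + 1)) = (a - 1) + (a + b - 1) / (n - 1) + b / (n + 1)
      + ((n : ℝ) ^ 2 * Real.log (1 + (n : ℝ)⁻¹) - n) := by
  have hn2 : (2 : ℝ) ≤ n := by exact_mod_cast hn
  have h1 : (n : ℝ) - 1 ≠ 0 := by linarith
  have h2 : (n : ℝ) + 1 ≠ 0 := by linarith
  have h3 : (n : ℝ) ≠ 0 := by linarith
  rw [v_sub_v_succ a b hn]
  field_simp
  ring

theorem diff_rate (a b : ℝ) :
    Tendsto (fun n : ℕ => (n : ℝ) ^ 2 * (v a b n - v a b (n + 1))) atTop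
      (𝓝 (a - 3 / 2)) := by
  have hcast : Tendsto (fun n : ℕ => (n : ℝ)) atTop atTop := tendsto_natCast_atTop_atTop
  have hfrac (c d : ℝ) : Tendsto (fun n : ℕ => c / ((n : ℝ) + d)) atTop (𝓝 0) :=
    tendsto_const_nhds.div_atTop (tendsto_atTop_add_const_right _ d hcast)
  have hlim := (((tendsto_const_nhds (x := a - 1)).add (hfrac (a + b - 1) (-1))).add
    (hfrac b 1)).add (Real.tendsto_sq_mul_log_one_add_inv_sub_self_atTop.comp hcast)
  rw [show a - 1 + 0 + 0 + -1 / 2 = a - 3 / 2 by ring] at hlim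
  refine hlim.congr' ?_
  filter_upwards [eventually_ge_atTop 2] with n hn
  rw [sq_mul_v_sub_v_succ a b hn, Function.comp_apply, sub_eq_add_neg (n : ℝ) 1]
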